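/- arXiv:2501.08698 — 4 statements merged into one kernel-verified Lean document; each statement's English description precedes it below -/
import Mathlib

section
/- For every graph G and positive integer p, the p-centered chromatic number satisfies χ_p(G) ≤ wcol*_{2^{p-2}}(G), where wcol*_s(G) is the minimum over linear orders π of the chromatic number of the graph G⟨π,s⟩ with edges between pairs in weak s-reachability. -/
/-!
Let `W` be a connected set on which no colour occurs exactly once, `u` its `π`-minimum and
`w ≠ u` a vertex of the same colour. A path from `u` to `w` inside `W` is longer than
`s = 2^(p-2)`, since otherwise `u ∈ WReach_s[w]`; its first `s` edges form a path that starts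
at its own minimum. Such a path of length at least `2^n` contains `n + 2` vertices that are
pairwise comparable under weak `s`-reachability: the start reaches every vertex of the path,
and the rest of the path, split at its minimum, has a half of length at least `2^(n-1)` that
again starts at its minimum. With `n = p - 2` this gives `p` vertices of `W` that a proper
colouring of `G⟨π,s⟩` must colour differently.
-/

variable {V : Type*}

/-- Weak s-reachability. -/
def WReach (G : SimpleGraph V) (π : LinearOrder V) (s : ℕ) (v : V) : Set V :=
  letI := π
  {u | u ≤ v ∧ ∃ p : G.Walk v u, p.IsPath ∧ p.length ≤ s ∧
      ∀ w ∈ p.support, w ≠ v → w ≠ u → u < w}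

/-- A `q`-centered coloring. -/
def IsCenteredColoring (G : SimpleGraph V) (q : ℕ) {C : Type*} (c : V → C) : Prop :=
  ∀ W : Set V, W.Nonempty → (G.induce W).Connected →
    (∃ v ∈ W, ∀ u ∈ W, c u = c v → u = v) ∨ q ≤ (c '' W).ncard

/-- The `p`-centered chromatic number. -/
noncomputable def chiP (G : SimpleGraph V) (p : ℕ) : ℕ :=
  sInf {k | ∃ c : V → Fin k, IsCenteredColoring G p c}

/-- `wcol*_s(G)`: the minimum over linear orders `π` of the chromatic number of the
graph `G⟨π,s⟩` with edges between pairs in weak `s`-reachability. -/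
noncomputable def wcolStar (G : SimpleGraph V) (s : ℕ) : ℕ :=
  sInf {k | ∃ (π : LinearOrder V) (c : V → Fin k),
    ∀ u v : V, u ≠ v → (u ∈ WReach G π s v ∨ v ∈ WReach G π s u) → c u ≠ c v}

open SimpleGraph Walk

lemma exists_isPath_of_induce_connected {G : SimpleGraph V} {W : Set V}
    (hW : (G.induce W).Connected) {u w : V} (hu : u ∈ W) (hw : w ∈ W) :
    ∃ P : G.Walk u w, P.IsPath ∧ ∀ x ∈ P.support, x ∈ W := by
  obtain ⟨P, hP⟩ := hW.exists_isPath ⟨u, hu⟩ ⟨w, hw⟩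
  refine ⟨P.map (Embedding.induce (G := G) W).toHom,
    hP.map (Embedding.induce (G := G) W).injective, fun x hx => ?_⟩
  obtain ⟨y, _, rfl⟩ := List.mem_map.mp (P.support_map (Embedding.induce W).toHom ▸ hx)
  exact y.2

section
variable {G : SimpleGraph V} [π : LinearOrder V] {s : ℕ}

def IsWReachColoring (G : SimpleGraph V) (π : LinearOrder V) (s : ℕ) {C : Type*}
    (c : V → C) : Prop :=
  ∀ u v : V, u ≠ v → (u ∈ WReach G π s v ∨ v ∈ WReach G π s u) → c u ≠ c v

def IsWReachChain (G : SimpleGraph V) (π : LinearOrder V) (s : ℕ) (T : Finset V) : Prop :=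
  ∀ x ∈ T, ∀ y ∈ T, x < y → x ∈ WReach G π s y

lemma mem_wreach_of_forall_le {b m : V} (Q : G.Walk b m) (hlen : Q.length ≤ s)
    (hmin : ∀ x ∈ Q.support, m ≤ x) : m ∈ WReach G π s b :=
  ⟨hmin b Q.start_mem_support, Q.bypass, Q.bypass_isPath, (Q.length_bypass_le_length).trans hlen,
    fun w hw _ hwm => (hmin w (Q.support_bypass_subset_support hw)).lt_of_ne' hwm⟩

lemma isWReachChain_singleton (x : V) : IsWReachChain G π s {x} := by
  simp [IsWReachChain]

lemma IsWReachChain.injOn {C : Type*} {c : V → C} (hc : IsWReachColoring G π s c)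
    {T : Finset V} (hT : IsWReachChain G π s T) : Set.InjOn c T := by
  intro x hx y hy hxy
  by_contra hne
  rcases lt_or_gt_of_ne hne with hlt | hlt
  · exact hc x y hne (Or.inl (hT x hx y hy hlt)) hxy
  · exact hc y x (Ne.symm hne) (Or.inl (hT y hy x hx hlt)) hxy.symm

lemma IsWReachChain.insert_of_walk [DecidableEq V] {m b : V} (W : G.Walk m b)
    (hlen : W.length ≤ s) (hmin : ∀ x ∈ W.support, m ≤ x) {T : Finset V}
    (hTW : ∀ z ∈ T, z ∈ W.support) (hT : IsWReachChain G π s T) :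
    IsWReachChain G π s (insert m T) := by
  have hreach : ∀ z ∈ T, m ∈ WReach G π s z := fun z hz =>
    mem_wreach_of_forall_le (W.takeUntil z (hTW z hz)).reverse
      ((length_reverse _).trans_le ((W.length_takeUntil_le_length _).trans hlen))
      (fun x hx => hmin x (W.support_takeUntil_subset_support _
        (by rwa [support_reverse, List.mem_reverse] at hx)))
  intro x hx y hy hlt
  rcases Finset.mem_insert.mp hx with rfl | hxT
  · rcases Finset.mem_insert.mp hy with rfl | hyT
    · exact absurd hlt (lt_irrefl _)
    · exact hreach y hyT
  · rcases Finset.mem_insert.mp hy with rfl | hyT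
    · exact absurd hlt (hmin x (hTW x hxT)).not_gt
    · exact hT x hxT y hyT hlt

lemma exists_wreachChain_cons {m x b : V} {k : ℕ} {h : G.Adj m x} {R : G.Walk x b}
    (hW : (cons h R).IsPath) (hmin : ∀ y ∈ (cons h R).support, m ≤ y)
    (hlen : (cons h R).length ≤ s)
    (hR : ∃ T : Finset V, (∀ z ∈ T, z ∈ R.support) ∧ T.card = k ∧
      IsWReachChain G π s T) :
    ∃ T : Finset V, (∀ z ∈ T, z ∈ (cons h R).support) ∧ T.card = k + 1 ∧
      IsWReachChain G π s T := by
  classical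
  obtain ⟨T, hTR, hcard, hT⟩ := hR
  have hTW : ∀ z ∈ T, z ∈ (cons h R).support := fun z hz =>
    List.mem_cons_of_mem _ (hTR z hz)
  have hmT : m ∉ T := fun hm => ((cons_isPath_iff h R).mp hW).2 (hTR m hm)
  refine ⟨insert m T, fun z hz => ?_, by rw [Finset.card_insert_of_notMem hmT, hcard],
    hT.insert_of_walk _ hlen hmin hTW⟩
  rcases Finset.mem_insert.mp hz with rfl | hz
  · exact start_mem_support _
  · exact hTW z hz

lemma exists_isPath_from_min {a b : V} (R : G.Walk a b) (hR : R.IsPath) :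
    ∃ (m c : V) (H : G.Walk m c), H.IsPath ∧ H.support ⊆ R.support ∧
      (∀ x ∈ R.support, m ≤ x) ∧ R.length ≤ 2 * H.length ∧ H.length ≤ R.length := by
  classical
  set m := R.support.toFinset.min' ⟨a, by simp⟩
  have hmR : m ∈ R.support := List.mem_toFinset.mp (Finset.min'_mem _ _)
  have hmin : ∀ x ∈ R.support, m ≤ x := fun x hx =>
    Finset.min'_le _ _ (List.mem_toFinset.mpr hx)
  have hsplit : (R.takeUntil m hmR).length + (R.dropUntil m hmR).length = R.length := by
    rw [← length_append, take_spec]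
  by_cases hdrop : (R.takeUntil m hmR).length ≤ (R.dropUntil m hmR).length
  · exact ⟨m, b, R.dropUntil m hmR, hR.dropUntil hmR, R.support_dropUntil_subset_support hmR,
      hmin, by omega, by omega⟩
  · refine ⟨m, a, (R.takeUntil m hmR).reverse, (hR.takeUntil hmR).reverse, fun x hx => ?_,
      hmin, by rw [length_reverse]; omega, by rw [length_reverse]; omega⟩
    rw [support_reverse, List.mem_reverse] at hx
    exact R.support_takeUntil_subset_support hmR hx

lemma exists_wreachChain_of_isPath (n : ℕ) {m b : V} (W : G.Walk m b) (hW : W.IsPath)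
    (hmin : ∀ x ∈ W.support, m ≤ x) (hlow : 2 ^ n ≤ W.length) (hupp : W.length ≤ s) :
    ∃ T : Finset V, (∀ z ∈ T, z ∈ W.support) ∧ T.card = n + 2 ∧
      IsWReachChain G π s T := by
  have hne : ¬ W.Nil := not_nil_iff_lt_length.mpr ((Nat.two_pow_pos n).trans_le hlow)
  induction n generalizing m b with
  | zero =>
    obtain ⟨x, h, R, rfl⟩ := not_nil_iff.mp hne
    exact exists_wreachChain_cons hW hmin hupp
      ⟨{x}, by simp [start_mem_support], rfl, isWReachChain_singleton x⟩
  | succ n ih =>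
    obtain ⟨x, h, R, rfl⟩ := not_nil_iff.mp hne
    obtain ⟨m', c, H, hH, hHR, hminR, hRlen, hHlen⟩ := exists_isPath_from_min R hW.of_cons
    rw [length_cons, pow_succ] at hlow
    rw [length_cons] at hupp
    obtain ⟨T, hTH, hcard, hT⟩ := ih H hH (fun y hy => hminR y (hHR hy)) (by omega) (by omega)
      (not_nil_iff_lt_length.mpr (by have := Nat.two_pow_pos n; omega))
    exact exists_wreachChain_cons hW hmin (by rw [length_cons]; omega)
      ⟨T, fun z hz => hHR (hTH z hz), hcard, hT⟩

lemma IsWReachColoring.isCenteredColoring [Finite V] {p : ℕ} {C : Type*} {c : V → C}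
    (hc : IsWReachColoring G π (2 ^ (p - 2)) c) : IsCenteredColoring G p c := by
  intro W hne hconn
  refine or_iff_not_imp_left.mpr fun huniq => ?_
  push Not at huniq
  obtain ⟨u, huW, humin⟩ := Set.exists_min_image W id W.toFinite hne
  obtain ⟨w, hwW, hcw, hwu⟩ := huniq u huW
  obtain ⟨P, hP, hPW⟩ := exists_isPath_of_induce_connected hconn huW hwW
  have hPmin : ∀ x ∈ P.support, u ≤ x := fun x hx => humin x (hPW x hx)
  have hPlong : 2 ^ (p - 2) < P.length := by
    by_contra! hshort
    have := mem_wreach_of_forall_le (s := 2 ^ (p - 2)) P.reverse (by rwa [length_reverse])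
      (fun x hx => hPmin x (by rwa [support_reverse, List.mem_reverse] at hx))
    exact hc u w hwu.symm (Or.inl this) hcw.symm
  have hQP : (P.take (2 ^ (p - 2))).support ⊆ P.support := (P.isSubwalk_take _).support_subset
  have hQlen : (P.take (2 ^ (p - 2))).length = 2 ^ (p - 2) := by
    rw [take_length]; omega
  obtain ⟨T, hTQ, hcard, hT⟩ := exists_wreachChain_of_isPath (p - 2) _ (hP.take _)
    (fun x hx => hPmin x (hQP hx)) hQlen.ge hQlen.le
  calc p ≤ T.card := by omega
    _ = (c '' T).ncard := by rw [(hT.injOn hc).ncard_image, Set.ncard_coe_finset]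
    _ ≤ (c '' W).ncard := Set.ncard_le_ncard (Set.image_mono fun z hz => hPW z (hQP (hTQ z hz)))
        (W.toFinite.image c)

end

theorem stmt13_general [Fintype V] (G : SimpleGraph V) (p : ℕ) :
    chiP G p ≤ wcolStar G (2 ^ (p - 2)) := by
  have hne : {k | ∃ (π : LinearOrder V) (c : V → Fin k),
      IsWReachColoring G π (2 ^ (p - 2)) c}.Nonempty :=
    ⟨Fintype.card V, LinearOrder.lift' (Fintype.equivFin V) (Fintype.equivFin V).injective,
      Fintype.equivFin V, fun _ _ huv _ h => huv ((Fintype.equivFin V).injective h)⟩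
  obtain ⟨π, c, hc⟩ := Nat.sInf_mem hne
  exact Nat.sInf_le ⟨c, hc.isCenteredColoring⟩

theorem stmt13 [Fintype V] (G : SimpleGraph V) (p : ℕ) (hp : 0 < p) :
    chiP G p ≤ wcolStar G (2 ^ (p - 2)) :=
  stmt13_general G p
end

section
/- For every odd positive integer p and every graph G, the chromatic number of the exact distance-p graph G^{[#p]} is at most wcol*_{2p−1}(G). -/
variable {V : Type*}

/-- The exact distance-`p` graph: distinct vertices are adjacent iff their distance
in `G` is exactly `p`. -/
def exactDistGraph (G : SimpleGraph V) (p : ℕ) : SimpleGraph V :=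
  SimpleGraph.fromRel (fun u v => G.Reachable u v ∧ G.dist u v = p)

open SimpleGraph in
/-- Any walk (not necessarily a path) witnesses weak reachability, via `bypass`. -/
lemma mem_WReach_of_walk {G : SimpleGraph V} [π : LinearOrder V] {s : ℕ} {a b : V}
    (hab : a ≤ b) (W : G.Walk b a) (hlen : W.length ≤ s)
    (hsupp : ∀ w ∈ W.support, w ≠ b → w ≠ a → a < w) : a ∈ WReach G π s b :=
  ⟨hab, W.bypass, W.bypass_isPath, W.length_bypass_le.trans hlen,
    fun w hw => hsupp w (W.support_bypass_subset hw)⟩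

open SimpleGraph in
/-- The key combinatorial lemma: if `x` is the minimum of `WReach q u`, `y` the minimum of
`WReach q v`, `x < y`, and `dist u v = p = 2q+1`, then `x ∈ WReach (2p-1) y`. -/
lemma wreach_key {G : SimpleGraph V} [π : LinearOrder V] {p q : ℕ} (hpq : p = 2 * q + 1)
    {u v x y : V}
    (hx : x ∈ WReach G π q u) (hxmin : ∀ z ∈ WReach G π q u, x ≤ z)
    (hy : y ∈ WReach G π q v) (hymin : ∀ z ∈ WReach G π q v, y ≤ z)
    (hxy : x < y) (hd : G.dist u v = p) (hr : G.Reachable u v) :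
    x ∈ WReach G π (2 * p - 1) y := by
  obtain ⟨hxu, Qx, -, hQxl, hQxs⟩ := hx
  obtain ⟨hyv, Qy, -, hQyl, hQys⟩ := hy
  obtain ⟨P, hPl⟩ := hr.exists_walk_length_eq_dist
  rw [hd] at hPl
  have hsupne : P.support.toFinset.Nonempty := ⟨u, by simp⟩
  set w := P.support.toFinset.min' hsupne with hw
  have hwmem : w ∈ P.support := by
    have := P.support.toFinset.min'_mem hsupne
    simpa using this
  have hwmin : ∀ z ∈ P.support, w ≤ z := fun z hz =>
    P.support.toFinset.min'_le z (by simpa using hz)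
  have hxw : x ≤ w := by
    have hlen : (P.takeUntil w hwmem).length + (P.dropUntil w hwmem).length = p := by
      rw [← SimpleGraph.Walk.length_append, SimpleGraph.Walk.take_spec, hPl]
    rcases le_or_gt (P.takeUntil w hwmem).length q with hT | hT
    · exact hxmin w (mem_WReach_of_walk (hwmin u P.start_mem_support)
        (P.takeUntil w hwmem) hT (fun z hz _ hzw =>
          lt_of_le_of_ne (hwmin z (SimpleGraph.Walk.support_takeUntil_subset _ _ hz))
            (Ne.symm hzw)))
    · have hD : (P.dropUntil w hwmem).length ≤ q := by omega
      have hyw : y ≤ w := hymin w (mem_WReach_of_walk (hwmin v P.end_mem_support)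
        (P.dropUntil w hwmem).reverse (by simpa using hD)
        (fun z hz _ hzw => lt_of_le_of_ne
          (hwmin z (SimpleGraph.Walk.support_dropUntil_subset _ _
            (by simpa [SimpleGraph.Walk.support_reverse] using hz))) (Ne.symm hzw)))
      exact le_of_lt (lt_of_lt_of_le hxy hyw)
  refine mem_WReach_of_walk hxy.le (Qy.reverse.append (P.reverse.append Qx)) ?_ ?_
  · simp only [SimpleGraph.Walk.length_append, SimpleGraph.Walk.length_reverse]
    omega
  · intro z hz _ hzx
    simp only [SimpleGraph.Walk.mem_support_append_iff, SimpleGraph.Walk.support_reverse,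
      List.mem_reverse] at hz
    rcases hz with hz | hz | hz
    · by_cases hzv : z = v
      · subst hzv
        exact lt_of_lt_of_le hxy hyv
      · by_cases hzy : z = y
        · subst hzy; exact hxy
        · exact lt_trans hxy (hQys z hz hzv hzy)
    · exact lt_of_le_of_ne (le_trans hxw (hwmin z hz)) (Ne.symm hzx)
    · by_cases hzu : z = u
      · subst hzu
        exact lt_of_le_of_ne hxu (Ne.symm hzx)
      · exact hQxs z hz hzu hzx

theorem stmt14 [Fintype V] (G : SimpleGraph V) (p : ℕ) (hodd : Odd p) :
    (exactDistGraph G p).chromaticNumber ≤ (wcolStar G (2 * p - 1) : ℕ∞) := by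
  classical
  obtain ⟨q, hq⟩ : ∃ q, p = 2 * q + 1 := by
    obtain ⟨m, hm⟩ := hodd
    exact ⟨m, by omega⟩
  set S : Set ℕ := {k | ∃ (π : LinearOrder V) (c : V → Fin k),
    ∀ u v : V, u ≠ v → (u ∈ WReach G π (2 * p - 1) v ∨ v ∈ WReach G π (2 * p - 1) u) →
      c u ≠ c v} with hS
  have hne : S.Nonempty := by
    refine ⟨Fintype.card V,
      LinearOrder.lift' (Fintype.equivFin V) (Fintype.equivFin V).injective,
      Fintype.equivFin V, fun u v huv _ => ?_⟩
    exact (Fintype.equivFin V).injective.ne huv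
  have hk : sInf S ∈ S := Nat.sInf_mem hne
  obtain ⟨π, c, hc⟩ := hk
  letI := π
  -- self membership in WReach
  have hmemself : ∀ v : V, v ∈ WReach G π q v := by
    intro v
    refine ⟨le_refl v, SimpleGraph.Walk.nil, SimpleGraph.Walk.IsPath.nil, by simp, ?_⟩
    intro w hw h1 _
    simp only [SimpleGraph.Walk.support_nil, List.mem_singleton] at hw
    exact absurd hw h1
  have hfin : ∀ v : V, (WReach G π q v).Finite := fun v => Set.toFinite _
  have hnev : ∀ v : V, ((hfin v).toFinset).Nonempty := fun v =>
    ⟨v, (hfin v).mem_toFinset.2 (hmemself v)⟩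
  set m : V → V := fun v => ((hfin v).toFinset).min' (hnev v) with hm
  have hm1 : ∀ v : V, m v ∈ WReach G π q v := fun v =>
    (hfin v).mem_toFinset.1 (Finset.min'_mem _ _)
  have hm2 : ∀ v : V, ∀ z ∈ WReach G π q v, m v ≤ z := fun v z hz =>
    Finset.min'_le _ _ ((hfin v).mem_toFinset.2 hz)
  -- key property of the colouring v ↦ c (m v)
  have hprop : ∀ u v : V, G.Reachable u v → G.dist u v = p → c (m u) ≠ c (m v) := by
    intro u v hr hd
    have hmne : m u ≠ m v := by
      intro he
      obtain ⟨-, Qx, -, hQxl, -⟩ := hm1 u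
      obtain ⟨-, Qy, -, hQyl, -⟩ := hm1 v
      have hle := G.dist_le (Qx.append ((Qy.reverse).copy he.symm rfl))
      rw [SimpleGraph.Walk.length_append, SimpleGraph.Walk.length_copy,
        SimpleGraph.Walk.length_reverse, hd] at hle
      omega
    rcases lt_trichotomy (m u) (m v) with h | h | h
    · exact hc _ _ hmne (Or.inl (wreach_key hq (hm1 u) (hm2 u) (hm1 v) (hm2 v) h hd hr))
    · exact absurd h hmne
    · exact hc _ _ hmne (Or.inr (wreach_key hq (hm1 v) (hm2 v) (hm1 u) (hm2 u) h
        (by rwa [G.dist_comm]) hr.symm))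
  have hcol : (exactDistGraph G p).Colorable (sInf S) := by
    refine ⟨SimpleGraph.Coloring.mk (fun v => c (m v)) ?_⟩
    intro a b hadj
    rw [exactDistGraph, SimpleGraph.fromRel_adj] at hadj
    obtain ⟨hab, h | h⟩ := hadj
    · exact hprop a b h.1 h.2
    · exact (hprop b a h.1 h.2).symm
  have := hcol.chromaticNumber_le
  have hws : wcolStar G (2 * p - 1) = sInf S := by rw [wcolStar, hS]
  rw [hws]
  exact this
end

section
/- Let G be a graph with wcol_{2r}(G) = ℓ. Then Splitter has a strategy to win the radius-r Splitter game on G in at most ℓ rounds: if in each round Splitter picks the π-minimum vertex of the current r-neighborhood (for an order π witnessing wcol_{2r}(G)), the game ends after at most ℓ rounds. -/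
variable {V : Type*}

/-- If `wcol_{2r}(G,π) ≤ ℓ` and Splitter always deletes the `π`-minimum vertex of the
current radius-`r` ball, then the radius-`r` Splitter game ends (the arena is empty)
after at most `ℓ` rounds, for any play `c` of Connector.
Here `X i` is the arena before round `i+1`, `B i` the radius-`r` ball (within `X i`)
around Connector's choice `c i`, and `s i` Splitter's choice. -/
theorem stmt15 [Fintype V] (G : SimpleGraph V) (r ℓ : ℕ) (hr : 0 < r)
    (π : LinearOrder V) (hπ : ∀ v, (WReach G π (2 * r) v).ncard ≤ ℓ)
    (X : ℕ → Set V) (B : ℕ → Set V) (c : ℕ → V) (s : ℕ → V)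
    (hX0 : X 0 = Set.univ)
    (hc : ∀ i, (X i).Nonempty → c i ∈ X i)
    (hB : ∀ i, B i = {w | w ∈ X i ∧
      ∃ p : G.Walk (c i) w, p.length ≤ r ∧ ∀ x ∈ p.support, x ∈ X i})
    (hsmem : ∀ i, (X i).Nonempty → s i ∈ B i)
    (hsmin : ∀ i, (X i).Nonempty → ∀ w ∈ B i, π.le (s i) w)
    (hstep : ∀ i, (X i).Nonempty → X (i + 1) = B i \ {s i})
    (hempty : ∀ i, ¬(X i).Nonempty → X (i + 1) = ∅) :
    X ℓ = ∅ := by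
  letI := π
  by_contra h
  have hne : (X ℓ).Nonempty := Set.nonempty_iff_ne_empty.mpr h
  -- all earlier arenas are nonempty
  have hNon : ∀ k, k ≤ ℓ → (X k).Nonempty := by
    intro k hk
    by_contra hk'
    have hE : ∀ m, k ≤ m → X m = ∅ := by
      intro m hm
      induction hm with
      | refl => exact Set.not_nonempty_iff_eq_empty.mp hk'
      | step hm ih =>
          exact hempty _ (by rw [ih]; simp)
    exact h (hE ℓ hk)
  have hBsub : ∀ i, B i ⊆ X i := by
    intro i x hx; rw [hB] at hx; exact hx.1
  have hchain : ∀ j, j ≤ ℓ → ∀ i, i ≤ j → X j ⊆ X i := by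
    intro j
    induction j with
    | zero => intro _ i hi; rw [Nat.le_zero.mp hi]
    | succ n ih =>
        intro hj i hi
        rcases Nat.lt_or_ge i (n + 1) with h' | h'
        · have hsub : X (n + 1) ⊆ X n := by
            rw [hstep n (hNon n (by omega))]
            exact fun x hx => hBsub n hx.1
          exact fun x hx => ih (by omega) i (by omega) (hsub hx)
        · have : i = n + 1 := by omega
          rw [this]
  set v := s ℓ with hv_def
  have hvX : v ∈ X ℓ := hBsub ℓ (hsmem ℓ (hNon ℓ le_rfl))
  -- every support vertex of a short walk from c i inside X i lies in B i
  have hball : ∀ i (x : V) (p : G.Walk (c i) x), p.length ≤ r →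
      (∀ y ∈ p.support, y ∈ X i) → ∀ y ∈ p.support, y ∈ B i := by
    intro i x p hlen hsupp y hy
    rw [hB]
    exact ⟨hsupp y hy, p.takeUntil y hy,
      le_trans (SimpleGraph.Walk.length_takeUntil_le p hy) hlen,
      fun z hz => hsupp z (SimpleGraph.Walk.support_takeUntil_subset p hy hz)⟩
  have key : ∀ i, i ≤ ℓ → s i ∈ WReach G π (2 * r) v := by
    intro i hi
    rcases eq_or_lt_of_le hi with rfl | hi'
    · refine ⟨le_refl _, SimpleGraph.Walk.nil, SimpleGraph.Walk.IsPath.nil, by simp, ?_⟩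
      intro w hw hwv _
      simp only [SimpleGraph.Walk.support_nil, List.mem_singleton] at hw
      exact absurd hw hwv
    · have hNi := hNon i hi
      have hsB := hsmem i hNi
      have hvB : v ∈ B i := by
        have hx : v ∈ X (i + 1) := hchain ℓ le_rfl (i + 1) hi' hvX
        rw [hstep i hNi] at hx
        exact hx.1
      have hsB' := hsB
      rw [hB] at hsB' hvB
      obtain ⟨hsX, p, hplen, hpsupp⟩ := hsB'
      obtain ⟨hvXi, q, hqlen, hqsupp⟩ := hvB
      have hvB : v ∈ B i := by
        rw [hB]; exact ⟨hvXi, q, hqlen, hqsupp⟩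
      set w : G.Walk v (s i) := q.reverse.append p with hw_def
      refine ⟨hsmin i hNi v hvB, w.bypass, SimpleGraph.Walk.bypass_isPath w, ?_, ?_⟩
      · calc w.bypass.length ≤ w.length := SimpleGraph.Walk.length_bypass_le w
          _ = q.reverse.length + p.length := SimpleGraph.Walk.length_append _ _
          _ = q.length + p.length := by rw [SimpleGraph.Walk.length_reverse]
          _ ≤ 2 * r := by omega
      · intro x hx hxv hxs
        have hx' : x ∈ w.support := SimpleGraph.Walk.support_bypass_subset w hx
        rw [hw_def, SimpleGraph.Walk.mem_support_append_iff] at hx'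
        have hxB : x ∈ B i := by
          rcases hx' with hx' | hx'
          · rw [SimpleGraph.Walk.support_reverse, List.mem_reverse] at hx'
            exact hball i v q hqlen hqsupp x hx'
          · exact hball i (s i) p hplen hpsupp x hx'
        exact lt_of_le_of_ne (hsmin i hNi x hxB) (Ne.symm hxs)
  -- distinctness of splitter's choices
  have hdist : ∀ a b, a < b → b ≤ ℓ → s a ≠ s b := by
    intro a b hab hb heq
    have hsb : s b ∈ X b := hBsub b (hsmem b (hNon b hb))
    have hsb' : s b ∈ X (a + 1) := hchain b hb (a + 1) hab hsb
    rw [hstep a (hNon a (by omega))] at hsb'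
    exact hsb'.2 (by simp [← heq])
  -- counting
  have hinj : Set.InjOn s ↑(Finset.range (ℓ + 1)) := by
    intro a ha b hb hab
    simp only [Finset.coe_range, Set.mem_Iio] at ha hb
    rcases lt_trichotomy a b with hlt | heq | hgt
    · exact absurd hab (hdist a b hlt (by omega))
    · exact heq
    · exact absurd hab.symm (hdist b a hgt (by omega))
  have hcard : ((Finset.range (ℓ + 1)).image s).card = ℓ + 1 := by
    rw [Finset.card_image_of_injOn hinj, Finset.card_range]
  have hsubW : (↑((Finset.range (ℓ + 1)).image s) : Set V) ⊆ WReach G π (2 * r) v := by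
    intro x hx
    simp only [Finset.coe_image, Finset.coe_range, Set.mem_image, Set.mem_Iio] at hx
    obtain ⟨a, ha, rfl⟩ := hx
    exact key a (by omega)
  have := Set.ncard_le_ncard hsubW (Set.toFinite _)
  rw [Set.ncard_coe_finset, hcard] at this
  have := hπ v
  omega
end

section
/- For every graph G, every linear order π of V(G), every positive integer r, and every set A ⊆ V(G): the number of distinct sets of the form N_r(v) ∩ A over v ∈ V(G) is at most (1/2)·(2r+2)^{wcol_{2r}(G)}·wcol_{2r}(G)·|A| + 1. -/
variable {V : Type*}

noncomputable def wcol [Fintype V] (G : SimpleGraph V) (s : ℕ) : ℕ :=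
  sInf {k | ∃ π : LinearOrder V, ∀ v, (WReach G π s v).ncard ≤ k}

/-!
Fix an order `σ` attaining `wcol_{2r}(G) = k`. A walk of length at most `r` from `v` to `u`
splits at its `σ`-least vertex `w` into two walks on which `w` is least; so `u ∈ N_r(v)` iff
`d(v, w) + d(u, w) ≤ r` for some `w`, where `d(x, w)` is the least length of a walk from `x`
on which `w` is least. Hence the trace `N_r(v) ∩ A` is determined by the profile `d(v, ·)`
restricted to `W = ⋃_{a ∈ A} {w | d(a, w) ≤ r}`, a subset of `WReach_{2r}[A]` of size at most
`k|A|`. Two walks from `v` to `x ≤ w` glue to a walk from `w` to `x` on which `x` is least, so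
a nontrivial profile is supported in `WReach_{2r}[w]` for its `σ`-largest vertex `w ∈ W`. It
is thus fixed by `w`, one value in `[0, r]` and at most `k - 1` values in `[0, r + 1]`, which
leaves at most `k|A|(r + 1)(r + 2)^(k - 1) + 1 ≤ (2r + 2)^k k|A| / 2 + 1` traces.
-/

theorem Set.ncard_biUnion_le_ncard_mul {ι α : Type*} {t : Set ι} (ht : t.Finite)
    (s : ι → Set α) {n : ℕ} (h : ∀ i ∈ t, (s i).ncard ≤ n) :
    (⋃ i ∈ t, s i).ncard ≤ t.ncard * n := by
  calc (⋃ i ∈ t, s i).ncard ≤ ∑ i ∈ ht.toFinset, (s i).ncard := by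
        simpa using ht.toFinset.set_ncard_biUnion_le s
    _ ≤ ht.toFinset.card • n := Finset.sum_le_card_nsmul _ _ _ (by simpa using h)
    _ = t.ncard * n := by rw [smul_eq_mul, ← Set.ncard_eq_toFinset_card t ht]

theorem Set.injective_restrict_setOf_eqOn_compl_mapsTo {α β : Type*} (s : Set α) (t : Set β)
    (c : α → β) :
    Function.Injective fun f : {f : α → β | Set.EqOn f c sᶜ ∧ Set.MapsTo f s t} =>
      Set.MapsTo.restrict f.1 s t f.2.2 := by
  rintro ⟨f, hfc, _⟩ ⟨g, hgc, _⟩ hfg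
  refine Subtype.ext (funext fun x => ?_)
  by_cases hx : x ∈ s
  · exact congrArg Subtype.val (congrFun hfg ⟨x, hx⟩)
  · exact (hfc hx).trans (hgc hx).symm

theorem Set.finite_setOf_eqOn_compl_mapsTo {α β : Type*} {s : Set α} (hs : s.Finite)
    {t : Set β} (ht : t.Finite) (c : α → β) :
    {f : α → β | Set.EqOn f c sᶜ ∧ Set.MapsTo f s t}.Finite := by
  have := hs.to_subtype
  have := ht.to_subtype
  exact Set.finite_coe_iff.1
    (Finite.of_injective _ (injective_restrict_setOf_eqOn_compl_mapsTo s t c))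

theorem Set.ncard_setOf_eqOn_compl_mapsTo_le {α β : Type*} {s : Set α} (hs : s.Finite)
    {t : Set β} (ht : t.Finite) (c : α → β) :
    {f : α → β | Set.EqOn f c sᶜ ∧ Set.MapsTo f s t}.ncard ≤ t.ncard ^ s.ncard := by
  have := hs.to_subtype
  have := ht.to_subtype
  rw [← Nat.card_coe_set_eq s, ← Nat.card_coe_set_eq t, ← Nat.card_fun, ← Nat.card_coe_set_eq]
  exact Nat.card_le_card_of_injective _ (injective_restrict_setOf_eqOn_compl_mapsTo s t c)

theorem exists_linearOrder_ncard_wreach_le_wcol [Fintype V] (G : SimpleGraph V) (s : ℕ) :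
    ∃ σ : LinearOrder V, ∀ v, (WReach G σ s v).ncard ≤ wcol G s :=
  Nat.sInf_mem (s := {k | ∃ σ : LinearOrder V, ∀ v, (WReach G σ s v).ncard ≤ k})
    ⟨Nat.card V, LinearOrder.lift' _ (Fintype.equivFin V).injective,
      fun _ => Set.ncard_le_card _⟩

namespace SimpleGraph

variable (G : SimpleGraph V) [LinearOrder V]

def ReachAbove (n : ℕ) (v w : V) : Prop :=
  ∃ p : G.Walk v w, p.length ≤ n ∧ ∀ x ∈ p.support, w ≤ x

/-- Capped at `r + 1`, so that an unreachable `w` does not get the junk value `sInf ∅ = 0`. -/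
noncomputable def aboveDist (r : ℕ) (v w : V) : ℕ :=
  sInf (insert (r + 1) {n | G.ReachAbove n v w})

variable {G}

theorem self_mem_wreach (s : ℕ) (v : V) : v ∈ WReach G ‹_› s v :=
  ⟨le_rfl, .nil, .nil, by simp, fun x hx hxv _ => absurd (by simpa using hx) hxv⟩

theorem ReachAbove.mem_wreach {n s : ℕ} {v w : V} (h : G.ReachAbove n v w) (hns : n ≤ s) :
    w ∈ WReach G ‹_› s v := by
  obtain ⟨p, hlen, hmin⟩ := h
  exact ⟨hmin v p.start_mem_support, p.bypass, p.bypass_isPath,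
    p.length_bypass_le_length.trans (hlen.trans hns),
    fun x hx _ hxw => (hmin x (p.support_bypass_subset_support hx)).lt_of_ne' hxw⟩

theorem ReachAbove.join_of_le {m n : ℕ} {v w x : V} (hw : G.ReachAbove m v w)
    (hx : G.ReachAbove n v x) (hxw : x ≤ w) : G.ReachAbove (m + n) w x := by
  obtain ⟨p, hp, hpmin⟩ := hw
  obtain ⟨q, hq, hqmin⟩ := hx
  refine ⟨p.reverse.append q, by simpa using add_le_add hp hq, fun y hy => ?_⟩
  rcases (Walk.mem_support_append_iff _ _).1 hy with hy | hy
  · exact hxw.trans (hpmin y (by simpa using hy))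
  · exact hqmin y hy

theorem Walk.exists_reachAbove_reachAbove {u v : V} (p : G.Walk v u) :
    ∃ w m n, G.ReachAbove m v w ∧ G.ReachAbove n u w ∧ m + n ≤ p.length := by
  obtain ⟨w, hw, hmin⟩ := Set.exists_min_image {x | x ∈ p.support} id
    (List.finite_toSet _) ⟨v, p.start_mem_support⟩
  refine ⟨w, (p.takeUntil w hw).length, (p.dropUntil w hw).length,
    ⟨_, le_rfl, fun x hx => hmin x (p.support_takeUntil_subset_support hw hx)⟩,
    ⟨(p.dropUntil w hw).reverse, by simp,
      fun x hx => hmin x (p.support_dropUntil_subset_support hw (by simpa using hx))⟩, ?_⟩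
  conv_rhs => rw [← p.take_spec hw, Walk.length_append]

variable {r n : ℕ} {u v w : V}

theorem aboveDist_le_succ : G.aboveDist r v w ≤ r + 1 :=
  Nat.sInf_le (Set.mem_insert _ _)

theorem aboveDist_le (h : G.ReachAbove n v w) : G.aboveDist r v w ≤ n :=
  Nat.sInf_le (Set.mem_insert_of_mem _ h)

theorem reachAbove_aboveDist (h : G.aboveDist r v w ≤ r) :
    G.ReachAbove (G.aboveDist r v w) v w := by
  rcases Nat.sInf_mem (s := insert (r + 1) {n | G.ReachAbove n v w}) ⟨_, Set.mem_insert _ _⟩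
    with h' | h'
  · unfold aboveDist at h
    omega
  · exact h'

theorem exists_walk_length_le_iff :
    (∃ p : G.Walk v u, p.length ≤ r) ↔ ∃ w, G.aboveDist r v w + G.aboveDist r u w ≤ r := by
  constructor
  · rintro ⟨p, hp⟩
    obtain ⟨w, m, n, hm, hn, hmn⟩ := p.exists_reachAbove_reachAbove
    exact ⟨w, (add_le_add (aboveDist_le hm) (aboveDist_le hn)).trans (hmn.trans hp)⟩
  · rintro ⟨w, hw⟩
    obtain ⟨p, hp, -⟩ := reachAbove_aboveDist (show G.aboveDist r v w ≤ r by omega)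
    obtain ⟨q, hq, -⟩ := reachAbove_aboveDist (show G.aboveDist r u w ≤ r by omega)
    exact ⟨p.append q.reverse, by simpa using (add_le_add hp hq).trans hw⟩

variable (G) (r) (A : Set V)

def reachAboveFrom : Set V :=
  ⋃ a ∈ A, {w | G.aboveDist r a w ≤ r}

open Classical in
/-- The distance profile of `v`, recorded only on `G.reachAboveFrom r A`; the value `r + 1`
stands for "out of reach". -/
noncomputable def aboveProfile (v : V) : V → ℕ :=
  (G.reachAboveFrom r A).piecewise (G.aboveDist r v) fun _ => r + 1

variable {G r A}

theorem aboveProfile_le_succ : G.aboveProfile r A v w ≤ r + 1 := by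
  by_cases hw : w ∈ G.reachAboveFrom r A
  · simpa [aboveProfile, hw] using aboveDist_le_succ
  · simp [aboveProfile, hw]

theorem aboveProfile_le_iff :
    G.aboveProfile r A v w ≤ r ↔ w ∈ G.reachAboveFrom r A ∧ G.aboveDist r v w ≤ r := by
  by_cases hw : w ∈ G.reachAboveFrom r A <;> simp [aboveProfile, hw]

theorem setOf_walk_length_le_eq (v : V) :
    {u ∈ A | ∃ p : G.Walk v u, p.length ≤ r}
      = {u ∈ A | ∃ w, G.aboveProfile r A v w + G.aboveDist r u w ≤ r} := by
  ext u
  simp only [Set.mem_ofPred_eq, exists_walk_length_le_iff]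
  refine and_congr_right fun hu => exists_congr fun w => ?_
  by_cases hw : w ∈ G.reachAboveFrom r A
  · simp [aboveProfile, hw]
  · have : ¬ G.aboveDist r u w ≤ r := fun h => hw (Set.mem_biUnion hu h)
    simp only [aboveProfile, hw, not_false_eq_true, Set.piecewise_eq_of_notMem]
    omega

theorem mem_wreach_of_aboveProfile_le {x y : V} (hx : G.aboveProfile r A v x ≤ r)
    (hy : G.aboveProfile r A v y ≤ r) (hxy : x ≤ y) : x ∈ WReach G ‹_› (2 * r) y := by
  obtain ⟨-, hx⟩ := aboveProfile_le_iff.1 hx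
  obtain ⟨-, hy⟩ := aboveProfile_le_iff.1 hy
  exact ((reachAbove_aboveDist hy).join_of_le (reachAbove_aboveDist hx) hxy).mem_wreach
    (by omega)

/-- A profile that is not identically `r + 1` is determined by its largest vertex `w` below
`r + 1`, its value there, and its values on the rest of `WReach_{2r}[w]`. -/
theorem range_aboveProfile_subset [Finite V] :
    Set.range (G.aboveProfile r A) ⊆ insert (fun _ => r + 1)
      (⋃ w ∈ G.reachAboveFrom r A, ⋃ b ∈ Set.Iic r,
        {f | Set.EqOn f (Function.update (fun _ => r + 1) w b) (WReach G ‹_› (2 * r) w \ {w})ᶜ ∧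
          Set.MapsTo f (WReach G ‹_› (2 * r) w \ {w}) (Set.Iic (r + 1))}) := by
  rintro _ ⟨v, rfl⟩
  rcases Set.eq_empty_or_nonempty {x | G.aboveProfile r A v x ≤ r} with h | h
  · refine Or.inl (funext fun x => ?_)
    have hx : ¬ G.aboveProfile r A v x ≤ r := Set.eq_empty_iff_forall_notMem.1 h x
    have : G.aboveProfile r A v x ≤ r + 1 := aboveProfile_le_succ
    omega
  obtain ⟨w, hw, hmax⟩ := Set.exists_max_image _ id (Set.toFinite _) h
  simp only [Set.mem_insert_iff, Set.mem_iUnion]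
  refine Or.inr ⟨w, (aboveProfile_le_iff.1 hw).1, _, hw, fun x hx => ?_,
    fun x _ => aboveProfile_le_succ⟩
  by_cases hxw : x = w
  · subst hxw
    simp
  rw [Function.update_of_ne hxw]
  refine le_antisymm aboveProfile_le_succ (Nat.not_le.1 fun hxr => ?_)
  exact hx ⟨mem_wreach_of_aboveProfile_le hxr hw (hmax x hxr), hxw⟩

variable [Finite V] {k : ℕ}

theorem ncard_reachAboveFrom_le (hk : ∀ w, (WReach G ‹_› (2 * r) w).ncard ≤ k) :
    (G.reachAboveFrom r A).ncard ≤ A.ncard * k :=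
  Set.ncard_biUnion_le_ncard_mul (Set.toFinite _) _ fun a _ =>
    (Set.ncard_le_ncard (fun _ (hw : G.aboveDist r a _ ≤ r) =>
      (reachAbove_aboveDist hw).mem_wreach (by omega))
      (Set.toFinite _)).trans (hk a)

theorem ncard_range_aboveProfile_le (hk : ∀ w, (WReach G ‹_› (2 * r) w).ncard ≤ k) :
    (Set.range (G.aboveProfile r A)).ncard
      ≤ (G.reachAboveFrom r A).ncard * ((r + 1) * (r + 2) ^ (k - 1)) + 1 := by
  have hfin := ((Set.toFinite (G.reachAboveFrom r A)).biUnion fun w _ =>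
    (Set.finite_Iic r).biUnion fun b _ =>
      Set.finite_setOf_eqOn_compl_mapsTo (Set.toFinite (WReach G ‹_› (2 * r) w \ {w}))
        (Set.finite_Iic (r + 1)) (Function.update (fun _ : V => r + 1) w b)).insert
    fun _ : V => r + 1
  refine (Set.ncard_le_ncard range_aboveProfile_subset hfin).trans
    ((Set.ncard_insert_le _ _).trans (Nat.add_le_add_right ?_ 1))
  refine Set.ncard_biUnion_le_ncard_mul (Set.toFinite _) _ fun w _ => ?_
  refine (Set.ncard_biUnion_le_ncard_mul (Set.finite_Iic r) _ fun b _ => ?_).trans_eq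
    (by rw [Set.ncard_Iic_nat])
  refine (Set.ncard_setOf_eqOn_compl_mapsTo_le (Set.toFinite _) (Set.finite_Iic _) _).trans ?_
  rw [Set.ncard_Iic_nat, Set.ncard_sdiff_singleton_of_mem (self_mem_wreach _ w)]
  exact Nat.pow_le_pow_right (by omega) (Nat.sub_le_sub_right (hk w) 1)

variable (A) in
theorem ncard_setOf_neighborhood_inter_le (hk : ∀ w, (WReach G ‹_› (2 * r) w).ncard ≤ k) :
    {S : Set V | ∃ v : V, S = {w ∈ A | ∃ p : G.Walk v w, p.length ≤ r}}.ncard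
      ≤ A.ncard * k * ((r + 1) * (r + 2) ^ (k - 1)) + 1 := by
  have htraces : {S : Set V | ∃ v : V, S = {w ∈ A | ∃ p : G.Walk v w, p.length ≤ r}}
      ⊆ (fun f => {u ∈ A | ∃ w, f w + G.aboveDist r u w ≤ r}) ''
          Set.range (G.aboveProfile r A) := by
    rintro _ ⟨v, rfl⟩
    exact ⟨_, ⟨v, rfl⟩, (setOf_walk_length_le_eq v).symm⟩
  calc _ ≤ (Set.range (G.aboveProfile r A)).ncard :=
        (Set.ncard_le_ncard htraces (Set.toFinite _)).trans (Set.ncard_image_le (Set.toFinite _))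
    _ ≤ (G.reachAboveFrom r A).ncard * ((r + 1) * (r + 2) ^ (k - 1)) + 1 :=
        ncard_range_aboveProfile_le hk
    _ ≤ A.ncard * k * ((r + 1) * (r + 2) ^ (k - 1)) + 1 := by
        gcongr
        exact ncard_reachAboveFrom_le hk

end SimpleGraph

theorem two_mul_mul_pow_pred_le (k r : ℕ) :
    2 * (k * ((r + 1) * (r + 2) ^ (k - 1))) ≤ k * (2 * r + 2) ^ k := by
  rcases k with _ | k
  · simp
  calc 2 * ((k + 1) * ((r + 1) * (r + 2) ^ (k + 1 - 1)))
      = (k + 1) * ((r + 2) ^ k * (2 * r + 2)) := by rw [Nat.add_sub_cancel]; ring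
    _ ≤ (k + 1) * (2 * r + 2) ^ (k + 1) := by
        rw [pow_succ]
        gcongr
        omega

theorem stmt18_general [Fintype V] (G : SimpleGraph V) (r : ℕ) (A : Set V) :
    ({S : Set V | ∃ v : V, S = {w ∈ A | ∃ p : G.Walk v w, p.length ≤ r}}.ncard : ℝ)
      ≤ (1 / 2 : ℝ) * ((2 * r + 2 : ℝ) ^ (wcol G (2 * r))) * (wcol G (2 * r) : ℝ)
          * (A.ncard : ℝ) + 1 := by
  obtain ⟨σ, hσ⟩ := exists_linearOrder_ncard_wreach_le_wcol G (2 * r)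
  set k := wcol G (2 * r)
  have hcount : ({S : Set V | ∃ v : V, S = {w ∈ A | ∃ p : G.Walk v w, p.length ≤ r}}.ncard : ℝ)
      ≤ A.ncard * (k * ((r + 1) * (r + 2) ^ (k - 1))) + 1 := by
    let _ := σ
    rw [← mul_assoc]
    exact_mod_cast G.ncard_setOf_neighborhood_inter_le A hσ
  have harith : (2 : ℝ) * (k * ((r + 1) * (r + 2) ^ (k - 1))) ≤ k * (2 * r + 2) ^ k := by
    exact_mod_cast two_mul_mul_pow_pred_le k r
  nlinarith [(A.ncard.cast_nonneg : (0 : ℝ) ≤ A.ncard)]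

/-- Neighborhood complexity: the number of distinct traces `N_r(v) ∩ A` is at most
`(1/2)·(2r+2)^{wcol_{2r}(G)}·wcol_{2r}(G)·|A| + 1`. -/
theorem stmt18 [Fintype V] (G : SimpleGraph V) (π : LinearOrder V) (r : ℕ) (hr : 0 < r)
    (A : Set V) :
    ({S : Set V | ∃ v : V, S = {w ∈ A | ∃ p : G.Walk v w, p.length ≤ r}}.ncard : ℝ)
      ≤ (1 / 2 : ℝ) * ((2 * r + 2 : ℝ) ^ (wcol G (2 * r))) * (wcol G (2 * r) : ℝ)
          * (A.ncard : ℝ) + 1 :=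
  stmt18_general G r A
end
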